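/- arXiv:2503.21655 — 6 statements merged into one kernel-verified Lean document; each statement's English description precedes it below -/
import Mathlib

section
/- Let G be a k-partite k-uniform hypergraph with m hyperedges and let P ∈ [0,1]^k be a sampling vector with weight w(P) = ∏_i p_i. Sample V[P] by including each vertex of part V_i independently with probability p_i, and let A be the set of vertices with nonzero degree in the induced subhypergraph G[V[P]]. Then E[|A|] ≤ 2k·m·w(P)·log_2(2km). -/
/-!
Every non-isolated vertex of `G[V[P]]` lies in a hyperedge all of whose vertices were sampled, so
`|A|` is at most `k` times the number of fully sampled hyperedges. A hyperedge meets each part once,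
hence it is fully sampled with probability exactly `w(P)`, and linearity of expectation gives
`E[|A|] ≤ k·m·w(P)`. This is below the claimed bound because `log₂(2km) ≥ 1`.
-/

open Finset
open scoped Classical

section Sampling

variable {V R : Type*} [Fintype V] [DecidableEq V]

/-- The probability that the random subset is exactly `S`, when each `u` is included independently
with probability `q u`. -/
def subsetWeight [CommRing R] (q : V → R) (S : Finset V) : R :=
  (∏ u ∈ S, q u) * ∏ u ∈ Sᶜ, (1 - q u)

lemma subsetWeight_nonneg {q : V → ℝ} (hq : ∀ u, q u ∈ Set.Icc (0 : ℝ) 1) (S : Finset V) :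
    0 ≤ subsetWeight q S :=
  mul_nonneg (prod_nonneg fun u _ => (hq u).1) (prod_nonneg fun u _ => sub_nonneg.2 (hq u).2)

lemma sum_prod_mul_prod_compl_of_subset [CommSemiring R] (f g : V → R) (e : Finset V) :
    ∑ S with e ⊆ S, (∏ u ∈ S, f u) * ∏ u ∈ Sᶜ, g u = (∏ u ∈ e, f u) * ∏ u ∈ eᶜ, (f u + g u) := by
  -- Killing `g` on `e` kills exactly the terms with `e ⊄ S` in the expansion of `∏ (f + g')`.
  set g' : V → R := fun u => if u ∈ e then 0 else g u
  have hterm (S : Finset V) : (∏ u ∈ S, f u) * ∏ u ∈ Sᶜ, g' u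
      = if e ⊆ S then (∏ u ∈ S, f u) * ∏ u ∈ Sᶜ, g u else 0 := by
    split_ifs with h
    · congr 1
      exact prod_congr rfl fun u hu => if_neg fun hue => mem_compl.1 hu (h hue)
    · obtain ⟨u, hue, huS⟩ := not_subset.1 h
      exact mul_eq_zero_of_right _ (prod_eq_zero (mem_compl.2 huS) (if_pos hue))
  calc ∑ S with e ⊆ S, (∏ u ∈ S, f u) * ∏ u ∈ Sᶜ, g u
      = ∑ S ∈ (univ : Finset V).powerset, (∏ u ∈ S, f u) * ∏ u ∈ univ \ S, g' u := by
        simp only [sum_filter, powerset_univ, ← compl_eq_univ_sdiff, hterm]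
    _ = ∏ u, (f u + g' u) := (prod_add f g' univ).symm
    _ = (∏ u ∈ e, f u) * ∏ u ∈ eᶜ, (f u + g u) := by
        rw [← prod_mul_prod_compl e]
        congr 1 <;> refine prod_congr rfl fun u hu => ?_
        · simp [g', hu]
        · simp [g', mem_compl.1 hu]

lemma sum_subsetWeight_of_subset [CommRing R] (q : V → R) (e : Finset V) :
    ∑ S with e ⊆ S, subsetWeight q S = ∏ u ∈ e, q u := by
  simp [subsetWeight, sum_prod_mul_prod_compl_of_subset]

end Sampling

section Hypergraph

variable {V : Type*} [Fintype V] [DecidableEq V]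

def nonisolatedVertices (E : Finset (Finset V)) (S : Finset V) : Finset V :=
  univ.filter fun v => ∃ e ∈ E, v ∈ e ∧ e ⊆ S

lemma card_nonisolatedVertices_le (E : Finset (Finset V)) (S : Finset V) :
    #(nonisolatedVertices E S) ≤ ∑ e ∈ E with e ⊆ S, #e := by
  refine (card_le_card fun v hv => ?_).trans card_biUnion_le
  obtain ⟨e, heE, hve, heS⟩ := (mem_filter.1 hv).2
  exact mem_biUnion.2 ⟨e, mem_filter.2 ⟨heE, heS⟩, hve⟩

lemma sum_subsetWeight_mul_card_nonisolatedVertices_le {q : V → ℝ}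
    (hq : ∀ u, q u ∈ Set.Icc (0 : ℝ) 1) (E : Finset (Finset V)) :
    ∑ S, subsetWeight q S * #(nonisolatedVertices E S) ≤ ∑ e ∈ E, #e * ∏ u ∈ e, q u :=
  calc ∑ S, subsetWeight q S * #(nonisolatedVertices E S)
      ≤ ∑ S, ∑ e ∈ E with e ⊆ S, subsetWeight q S * #e := by
        refine sum_le_sum fun S _ => ?_
        rw [← mul_sum]
        refine mul_le_mul_of_nonneg_left ?_ (subsetWeight_nonneg hq S)
        exact_mod_cast card_nonisolatedVertices_le E S
    _ = ∑ e ∈ E, ∑ S with e ⊆ S, subsetWeight q S * #e :=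
        sum_comm' fun S e => by simp only [mem_filter, mem_univ, true_and, and_comm]
    _ = ∑ e ∈ E, #e * ∏ u ∈ e, q u := by
        simp only [← sum_mul, sum_subsetWeight_of_subset, mul_comm]

end Hypergraph

section Partite

variable {V ι : Type*} [Fintype ι] [DecidableEq ι] {χ : V → ι} {e : Finset V}

lemma card_eq_of_card_filter_eq_one (he : ∀ i, #(e.filter fun v => χ v = i) = 1) :
    #e = Fintype.card ι := by
  rw [card_eq_sum_card_fiberwise (t := univ) fun v _ => mem_univ (χ v)]
  simp only [he, sum_const, card_univ, smul_eq_mul, mul_one]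

lemma prod_comp_eq_prod_of_card_filter_eq_one {M : Type*} [CommMonoid M]
    (he : ∀ i, #(e.filter fun v => χ v = i) = 1) (f : ι → M) :
    ∏ v ∈ e, f (χ v) = ∏ i, f i := by
  rw [← prod_fiberwise_of_maps_to (t := univ) (g := χ) fun v _ => mem_univ (χ v)]
  refine prod_congr rfl fun i _ => ?_
  obtain ⟨u, hu⟩ := card_eq_one.1 (he i)
  have hχu : χ u = i := by
    have hu' : u ∈ e.filter fun v => χ v = i := by rw [hu]; exact mem_singleton_self u
    exact (mem_filter.1 hu').2
  rw [hu, prod_singleton, hχu]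

end Partite

lemma le_two_mul_mul_logb_two_mul (n : ℕ) : (n : ℝ) ≤ 2 * n * Real.logb 2 (2 * n) := by
  rcases Nat.eq_zero_or_pos n with rfl | hn
  · simp
  have hn' : (1 : ℝ) ≤ n := by exact_mod_cast hn
  have hlog : 1 ≤ Real.logb 2 (2 * n) := by
    rw [Real.logb_mul two_ne_zero (by positivity), Real.logb_self_eq_one one_lt_two]
    linarith [Real.logb_nonneg one_lt_two hn']
  nlinarith

theorem expected_nonisolated_le_general
    {V : Type*} [Fintype V] [DecidableEq V] (k : ℕ) (χ : V → Fin k)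
    (E : Finset (Finset V))
    (hpart : ∀ e ∈ E, ∀ i : Fin k, (e.filter fun v => χ v = i).card = 1)
    (p : Fin k → ℝ) (hp : ∀ i, p i ∈ Set.Icc (0:ℝ) 1) :
    (∑ S : Finset V,
        ((∏ u ∈ S, p (χ u)) * ∏ u ∈ Sᶜ, (1 - p (χ u))) *
          ((Finset.univ.filter fun v : V => ∃ e ∈ E, v ∈ e ∧ e ⊆ S).card : ℝ))
      ≤ 2 * k * E.card * (∏ i, p i) * Real.logb 2 (2 * k * E.card) := by
  have hexpect :=
    sum_subsetWeight_mul_card_nonisolatedVertices_le (q := fun u => p (χ u)) (fun u => hp _) E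
  have hedge : ∀ e ∈ E, (#e : ℝ) * ∏ u ∈ e, p (χ u) = k * ∏ i, p i := fun e he => by
    rw [card_eq_of_card_filter_eq_one (hpart e he), Fintype.card_fin,
      prod_comp_eq_prod_of_card_filter_eq_one (hpart e he)]
  rw [sum_congr rfl hedge, sum_const, nsmul_eq_mul] at hexpect
  have hw : 0 ≤ ∏ i, p i := prod_nonneg fun i _ => (hp i).1
  calc _ ≤ (E.card : ℝ) * (k * ∏ i, p i) := hexpect
    _ = ((k * E.card : ℕ) : ℝ) * ∏ i, p i := by push_cast; ring
    _ ≤ 2 * ((k * E.card : ℕ) : ℝ) * Real.logb 2 (2 * ((k * E.card : ℕ) : ℝ)) * ∏ i, p i :=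
        mul_le_mul_of_nonneg_right (le_two_mul_mul_logb_two_mul _) hw
    _ = _ := by push_cast [← mul_assoc]; ring

/-- The expected number of non-isolated vertices of the sampled induced
subhypergraph is at most `2·k·m·w(P)·log₂(2km)`. -/
theorem expected_nonisolated_le
    {V : Type*} [Fintype V] [DecidableEq V] (k : ℕ) (χ : V → Fin k)
    (E : Finset (Finset V))
    (hpart : ∀ e ∈ E, ∀ i : Fin k, (e.filter fun v => χ v = i).card = 1)
    (hm : 1 ≤ E.card)
    (p : Fin k → ℝ) (hp : ∀ i, p i ∈ Set.Icc (0:ℝ) 1) :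
    (∑ S : Finset V,
        ((∏ u ∈ S, p (χ u)) * ∏ u ∈ Sᶜ, (1 - p (χ u))) *
          ((Finset.univ.filter fun v : V => ∃ e ∈ E, v ∈ e ∧ e ⊆ S).card : ℝ))
      ≤ 2 * k * E.card * (∏ i, p i) * Real.logb 2 (2 * k * E.card) :=
  expected_nonisolated_le_general k χ E hpart p hp
end

section
/- Let r_1, ..., r_k be nonnegative real numbers each at most 1. Then the index set {1, ..., k} can be partitioned into three sets I_1, I_2, I_3 such that, writing s_j = Σ_{i ∈ I_j} r_i, after reordering so that s_1 ≤ s_2 ≤ s_3, we have s_3 ≤ s_1 + 1. -/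
open Finset

/-! Greedy: place the items one at a time, each into a currently lightest part. If all loads are
within `c` of each other before a step, adding an item of size `x ∈ [0, c]` to a lightest part
keeps them so, since that part stays within `x ≤ c` of every other part. -/

section GreedyPartition

variable {ι β : Type*}

def LoadsWithin (c : ℝ) (S : β → ℝ) : Prop :=
  ∀ j j', S j ≤ S j' + c

theorem LoadsWithin.add_ite_of_forall_le [DecidableEq β] {S : β → ℝ} {c x : ℝ}
    (hS : LoadsWithin c S) {j₀ : β} (hj₀ : ∀ j, S j₀ ≤ S j) (hx : 0 ≤ x) (hxc : x ≤ c) :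
    LoadsWithin c fun j => S j + if j₀ = j then x else 0 := by
  intro j j'
  dsimp only
  have hjj' := hS j j'
  have hmin := hj₀ j'
  split_ifs with h h' <;> first | (subst h; linarith) | linarith

theorem sum_filter_update_insert [DecidableEq ι] [DecidableEq β] {s : Finset ι} {a : ι}
    (ha : a ∉ s) (f : ι → β) (j₀ j : β) (r : ι → ℝ) :
    ∑ i ∈ insert a s with Function.update f a j₀ i = j, r i
      = ∑ i ∈ s with f i = j, r i + if j₀ = j then r a else 0 := by
  have hs : ∑ i ∈ s with Function.update f a j₀ i = j, r i = ∑ i ∈ s with f i = j, r i := by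
    refine sum_congr (filter_congr fun i hi => ?_) fun _ _ => rfl
    rw [Function.update_of_ne (ne_of_mem_of_not_mem hi ha)]
  rw [filter_insert, Function.update_self]
  split_ifs with h
  · rw [sum_insert (fun h' => ha (mem_of_mem_filter a h')), hs, add_comm]
  · rw [hs, add_zero]

theorem exists_loadsWithin_partition [DecidableEq ι] [DecidableEq β] [Fintype β] [Nonempty β]
    (s : Finset ι) (r : ι → ℝ) {c : ℝ} (hc : 0 ≤ c) (h0 : ∀ i ∈ s, 0 ≤ r i)
    (h1 : ∀ i ∈ s, r i ≤ c) :
    ∃ f : ι → β, LoadsWithin c fun j => ∑ i ∈ s with f i = j, r i := by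
  induction s using Finset.induction_on with
  | empty => exact ⟨fun _ => Classical.arbitrary β, fun _ _ => by simpa using hc⟩
  | insert a s ha ih =>
    obtain ⟨f, hf⟩ := ih (fun i hi => h0 i (mem_insert_of_mem hi))
      (fun i hi => h1 i (mem_insert_of_mem hi))
    obtain ⟨j₀, -, hj₀⟩ :=
      exists_min_image univ (fun j => ∑ i ∈ s with f i = j, r i) univ_nonempty
    refine ⟨Function.update f a j₀, ?_⟩
    simp only [sum_filter_update_insert ha]
    exact hf.add_ite_of_forall_le (fun j => hj₀ j (mem_univ j))
      (h0 a (mem_insert_self a s)) (h1 a (mem_insert_self a s))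

end GreedyPartition

/-- Numbers `r i ∈ [0,1]` can be partitioned into three groups whose
sums pairwise differ by at most `1` (equivalently, after sorting `s₁ ≤ s₂ ≤ s₃`,
`s₃ ≤ s₁ + 1`). -/
theorem balanced_three_partition
    (k : ℕ) (r : Fin k → ℝ) (h0 : ∀ i, 0 ≤ r i) (h1 : ∀ i, r i ≤ 1) :
    ∃ f : Fin k → Fin 3, ∀ j j' : Fin 3,
      (∑ i ∈ Finset.univ.filter fun i => f i = j, r i)
        ≤ (∑ i ∈ Finset.univ.filter fun i => f i = j', r i) + 1 :=
  exists_loadsWithin_partition univ r zero_le_one (fun i _ => h0 i) (fun i _ => h1 i)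
end

section
/- Let f : ℝ³ → ℝ be jointly convex and fully symmetric. Then for all ℓ_1, ℓ_2, ℓ_3 ≥ 0, f(1+ℓ_1, 1+ℓ_2, 1+ℓ_3) ≤ f(1, 1, 1+ℓ_1+ℓ_2+ℓ_3). -/
/-!
Spreading two coordinates apart while keeping their sum fixed can only increase a convex function
that is symmetric in them: the spread-out point `(x, y)` and its swap `(y, x)` have the same value,
and every more balanced pair lies on the segment between them. Two such moves take
`(1 + ℓ₁, 1 + ℓ₂, 1 + ℓ₃)` to `(1, 1 + ℓ₁ + ℓ₂, 1 + ℓ₃)` and then to `(1, 1, 1 + ℓ₁ + ℓ₂ + ℓ₃)`.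
-/

open Set

lemma Prod.mk_mem_segment_swap {E : Type*} [AddCommGroup E] [Module ℝ E]
    {x y u v : ℝ} (hxu : x ≤ u) (huy : u ≤ y) (hsum : u + v = x + y) (z : E) :
    (u, v, z) ∈ segment ℝ (x, y, z) (y, x, z) := by
  obtain ⟨a, b, ha, hb, hab, rfl⟩ : u ∈ segment ℝ x y := by
    rw [segment_eq_Icc (hxu.trans huy)]; exact ⟨hxu, huy⟩
  refine ⟨a, b, ha, hb, hab, ?_⟩
  ext <;> simp only [Prod.fst_add, Prod.snd_add, Prod.smul_fst, Prod.smul_snd, smul_eq_mul]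
  · linear_combination (x + y) * hab - hsum
  · rw [← add_smul, hab, one_smul]

lemma ConvexOn.le_of_balance {E : Type*} [AddCommGroup E] [Module ℝ E]
    {f : ℝ × ℝ × E → ℝ} (hf : ConvexOn ℝ univ f)
    (hsym : ∀ x y z, f (x, y, z) = f (y, x, z))
    {x y u v : ℝ} (hxu : x ≤ u) (huy : u ≤ y) (hsum : u + v = x + y) (z : E) :
    f (u, v, z) ≤ f (x, y, z) := by
  calc f (u, v, z)
      ≤ max (f (x, y, z)) (f (y, x, z)) :=
        hf.le_on_segment (mem_univ _) (mem_univ _) (Prod.mk_mem_segment_swap hxu huy hsum z)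
    _ = f (x, y, z) := by rw [← hsym, max_self]

/-- For `f : ℝ³ → ℝ` jointly convex and fully symmetric, for all
`ℓ₁, ℓ₂, ℓ₃ ≥ 0`: `f(1+ℓ₁, 1+ℓ₂, 1+ℓ₃) ≤ f(1, 1, 1+ℓ₁+ℓ₂+ℓ₃)`. -/
theorem convex_symmetric_merge_bound
    (f : ℝ × ℝ × ℝ → ℝ)
    (hconv : ConvexOn ℝ Set.univ f)
    (hsym12 : ∀ x y z : ℝ, f (x, y, z) = f (y, x, z))
    (hsym23 : ∀ x y z : ℝ, f (x, y, z) = f (x, z, y))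
    (l₁ l₂ l₃ : ℝ) (h1 : 0 ≤ l₁) (h2 : 0 ≤ l₂) (h3 : 0 ≤ l₃) :
    f (1 + l₁, 1 + l₂, 1 + l₃) ≤ f (1, 1, 1 + l₁ + l₂ + l₃) := by
  calc f (1 + l₁, 1 + l₂, 1 + l₃)
      ≤ f (1, 1 + l₁ + l₂, 1 + l₃) :=
        hconv.le_of_balance hsym12 (by linarith) (by linarith) (by ring) _
    _ = f (1 + l₁ + l₂, 1 + l₃, 1) := by rw [hsym12, hsym23]
    _ ≤ f (1, 1 + l₁ + l₂ + l₃, 1) :=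
        hconv.le_of_balance hsym12 (by linarith) (by linarith) (by ring) _
    _ = f (1, 1, 1 + l₁ + l₂ + l₃) := hsym23 _ _ _
end

section
/- Let G be a bipartite graph with parts V_1, V_2. Fix j ≥ 0, W > 0, and a set Q ⊆ V_2 of vertices each having degree at least W, with |Q| ≥ 2^j. Sample S ⊆ Q by including each vertex independently with probability 2^{-j}, and independently sample T ⊆ V_1 by including each vertex independently with probability 1/W (assume W ≥ 1). Then the probability that there exists an edge between T and S is at least (1 − 1/e)². -/
/-!
With `p = 2⁻ʲ`, the sample `S` meets `Q` with probability `1 - (1 - p)^|Q| ≥ 1 - 1/e`, as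
`|Q| ≥ 2ʲ`. Whenever `S` contains some `u ∈ Q`, the sample `T` meets the neighbourhood of `u`,
which has at least `W` vertices, with probability `1 - (1 - 1/W)^deg u ≥ 1 - 1/e`. Both bounds
come from `1 - x ≤ e⁻ˣ`, and the probability of a hit is at least the product of the two.
-/

open Finset
open scoped Classical

section BernoulliSubsets

variable {ι R : Type*} [DecidableEq ι] [CommRing R] (q : R) {s A : Finset ι}

theorem sum_powerset_filter_disjoint (hA : A ⊆ s) :
    ∑ t ∈ s.powerset with Disjoint t A, q ^ #t * (1 - q) ^ (#s - #t) = (1 - q) ^ #A := by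
  have hfilter : {t ∈ s.powerset | Disjoint t A} = (s \ A).powerset := by
    ext t
    simp only [mem_filter, mem_powerset, subset_sdiff]
  have hcard : #s = #A + #(s \ A) := by
    rw [card_sdiff_of_subset hA]
    have := card_le_card hA
    omega
  rw [hfilter]
  calc ∑ t ∈ (s \ A).powerset, q ^ #t * (1 - q) ^ (#s - #t)
      = ∑ t ∈ (s \ A).powerset, (1 - q) ^ #A * (q ^ #t * (1 - q) ^ (#(s \ A) - #t)) := by
        refine sum_congr rfl fun t ht => ?_
        have := card_le_card (mem_powerset.1 ht)
        rw [hcard, Nat.add_sub_assoc this, pow_add]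
        ring
    _ = (1 - q) ^ #A := by
        rw [← mul_sum, sum_pow_mul_eq_add_pow, add_sub_cancel, one_pow, mul_one]

theorem sum_powerset_mul_indicator_not_disjoint (hA : A ⊆ s) :
    ∑ t ∈ s.powerset, q ^ #t * (1 - q) ^ (#s - #t) * (if ¬Disjoint t A then 1 else 0)
      = 1 - (1 - q) ^ #A := by
  have htotal := sum_pow_mul_eq_add_pow q (1 - q) s
  rw [add_sub_cancel, one_pow, ← sum_filter_add_sum_filter_not _ (fun t => Disjoint t A),
    sum_powerset_filter_disjoint q hA] at htotal
  simp only [mul_ite, mul_one, mul_zero, ← sum_filter]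
  exact eq_sub_of_add_eq' htotal

end BernoulliSubsets

theorem bernoulli_weight_nonneg {q : ℝ} (hq0 : 0 ≤ q) (hq1 : q ≤ 1) (a b : ℕ) :
    0 ≤ q ^ a * (1 - q) ^ b :=
  mul_nonneg (pow_nonneg hq0 _) (pow_nonneg (sub_nonneg.2 hq1) _)

theorem mul_one_sub_pow_le_sum_powerset_mul {ι : Type*} [DecidableEq ι] {s A : Finset ι}
    {q c : ℝ} (hq0 : 0 ≤ q) (hq1 : q ≤ 1) (hA : A ⊆ s) {f : Finset ι → ℝ} (hf0 : ∀ t, 0 ≤ f t) (hf : ∀ t, ¬Disjoint t A → c ≤ f t) :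
    c * (1 - (1 - q) ^ #A) ≤ ∑ t ∈ s.powerset, q ^ #t * (1 - q) ^ (#s - #t) * f t := by
  rw [← sum_powerset_mul_indicator_not_disjoint q hA, mul_sum]
  refine sum_le_sum fun t _ => ?_
  rw [mul_left_comm]
  refine mul_le_mul_of_nonneg_left ?_ (bernoulli_weight_nonneg hq0 hq1 _ _)
  split_ifs with ht
  · simpa using hf0 t
  · simpa using hf t ht

theorem one_sub_one_div_pow_le_exp_neg_one {W : ℝ} {m : ℕ} (hW : 1 ≤ W) (hm : W ≤ m) :
    (1 - 1 / W) ^ m ≤ Real.exp (-1) := by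
  have hW0 : 0 < W := zero_lt_one.trans_le hW
  calc (1 - 1 / W) ^ m ≤ Real.exp (-(1 / W)) ^ m := by
        gcongr
        · rw [sub_nonneg, div_le_one hW0]
          exact hW
        · exact Real.one_sub_le_exp_neg _
    _ = Real.exp (-(m / W)) := by
        rw [← Real.exp_nat_mul]
        ring_nf
    _ ≤ Real.exp (-1) := by
        gcongr
        rwa [le_div_iff₀ hW0, one_mul]

theorem one_sub_exp_neg_one_le_sum_hit {V₁ V₂ : Type*} [Fintype V₁] [DecidableEq V₁]
    [DecidableEq V₂] (Ed : Finset (V₁ × V₂)) {W : ℝ} (hW : 1 ≤ W) {S : Finset V₂} {u : V₂}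
    (hu : u ∈ S) (hdeg : W ≤ ((Ed.filter fun e => e.2 = u).card : ℝ)) :
    1 - Real.exp (-1) ≤ ∑ T : Finset V₁,
      (1 / W) ^ T.card * (1 - 1 / W) ^ (Fintype.card V₁ - T.card) *
        (if ∃ u ∈ S, ∃ v ∈ T, (v, u) ∈ Ed then 1 else 0) := by
  set N : Finset V₁ := {v | (v, u) ∈ Ed}
  have hN : W ≤ #N := by
    refine hdeg.trans (Nat.cast_le.2 (card_le_card_of_injOn Prod.fst ?_ ?_))
    · intro e he
      simp only [coe_filter, Set.mem_ofPred_eq] at he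
      simpa [N, ← he.2] using he.1
    · intro e₁ he₁ e₂ he₂ h
      simp only [coe_filter, Set.mem_ofPred_eq] at he₁ he₂
      exact Prod.ext h (he₁.2.trans he₂.2.symm)
  calc 1 - Real.exp (-1) ≤ 1 * (1 - (1 - 1 / W) ^ #N) := by
        linarith [one_sub_one_div_pow_le_exp_neg_one hW hN]
    _ ≤ _ := by
        rw [← card_univ, ← powerset_univ]
        refine mul_one_sub_pow_le_sum_powerset_mul (by positivity)
          (div_le_one_of_le₀ hW (by positivity)) (subset_univ N) (fun T => ?_) fun T hTN => ?_
        · split_ifs <;> norm_num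
        · obtain ⟨v, hvT, hvN⟩ := not_disjoint_iff.1 hTN
          rw [if_pos ⟨u, hu, v, hvT, by simpa [N] using hvN⟩]

theorem base_sampling_lemma_general
    {V₁ V₂ : Type*} [Fintype V₁] [DecidableEq V₁] [DecidableEq V₂]
    (Ed : Finset (V₁ × V₂)) (j : ℕ) (W : ℝ) (hW : 1 ≤ W)
    (Q : Finset V₂)
    (hdeg : ∀ u ∈ Q, W ≤ ((Ed.filter fun e => e.2 = u).card : ℝ))
    (hQ : 2 ^ j ≤ Q.card) :
    ((1 - 1 / Real.exp 1) ^ 2 : ℝ) ≤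
      ∑ S ∈ Q.powerset, ∑ T : Finset V₁,
        (((1:ℝ) / 2 ^ j) ^ S.card * (1 - (1:ℝ) / 2 ^ j) ^ (Q.card - S.card)) *
          ((1 / W) ^ T.card * (1 - 1 / W) ^ (Fintype.card V₁ - T.card)) *
          (if ∃ u ∈ S, ∃ v ∈ T, (v, u) ∈ Ed then 1 else 0) := by
  set p : ℝ := 1 / 2 ^ j
  have hmiss : (1 - p) ^ #Q ≤ Real.exp (-1) :=
    one_sub_one_div_pow_le_exp_neg_one (one_le_pow₀ one_le_two) (by exact_mod_cast hQ)
  have he : 0 ≤ 1 - Real.exp (-1) := sub_nonneg.2 (Real.exp_le_one_iff.2 (by norm_num))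
  rw [one_div (Real.exp 1), ← Real.exp_neg]
  calc (1 - Real.exp (-1)) ^ 2 ≤ (1 - Real.exp (-1)) * (1 - (1 - p) ^ #Q) := by
        rw [sq]
        gcongr
    _ ≤ ∑ S ∈ Q.powerset, p ^ #S * (1 - p) ^ (#Q - #S) * ∑ T : Finset V₁,
          (1 / W) ^ #T * (1 - 1 / W) ^ (Fintype.card V₁ - #T) *
            (if ∃ u ∈ S, ∃ v ∈ T, (v, u) ∈ Ed then 1 else 0) := by
        refine mul_one_sub_pow_le_sum_powerset_mul (by positivity)
          (div_le_one_of_le₀ (one_le_pow₀ one_le_two) (by positivity)) subset_rfl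
          (fun S => sum_nonneg fun T _ => mul_nonneg ?_ (by split_ifs <;> norm_num))
          fun S hSQ => ?_
        · exact bernoulli_weight_nonneg (by positivity) (div_le_one_of_le₀ hW (by positivity)) _ _
        · obtain ⟨u, huS, huQ⟩ := not_disjoint_iff.1 hSQ
          exact one_sub_exp_neg_one_le_sum_hit Ed hW huS (hdeg u huQ)
    _ = _ := by simp only [mul_sum, mul_assoc]

/-- Base case of the Sampling Lemma. In a bipartite graph, if every
vertex of `Q ⊆ V₂` has degree at least `W ≥ 1` and `|Q| ≥ 2^j`, then sampling
`S ⊆ Q` (each vertex independently with probability `2^{-j}`) and independently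
`T ⊆ V₁` (each vertex with probability `1/W`), the probability that some edge joins
`T` and `S` is at least `(1 − 1/e)²`. -/
theorem base_sampling_lemma
    {V₁ V₂ : Type*} [Fintype V₁] [Fintype V₂] [DecidableEq V₁] [DecidableEq V₂]
    (Ed : Finset (V₁ × V₂)) (j : ℕ) (W : ℝ) (hW : 1 ≤ W)
    (Q : Finset V₂)
    (hdeg : ∀ u ∈ Q, W ≤ ((Ed.filter fun e => e.2 = u).card : ℝ))
    (hQ : 2 ^ j ≤ Q.card) :
    ((1 - 1 / Real.exp 1) ^ 2 : ℝ) ≤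
      ∑ S ∈ Q.powerset, ∑ T : Finset V₁,
        (((1:ℝ) / 2 ^ j) ^ S.card * (1 - (1:ℝ) / 2 ^ j) ^ (Q.card - S.card)) *
          ((1 / W) ^ T.card * (1 - 1 / W) ^ (Fintype.card V₁ - T.card)) *
          (if ∃ u ∈ S, ∃ v ∈ T, (v, u) ∈ Ed then 1 else 0) :=
  base_sampling_lemma_general Ed j W hW Q hdeg hQ
end

section
/- Let G be a k-partite graph with parts U_1, ..., U_k and let (I_1, I_2, I_3) be a partition of {1, ..., k}. For j ∈ {1,2,3}, let A_j be the set of tuples S ∈ ∏_{i ∈ I_j} U_i whose vertices form a clique in G. Define a tripartite graph F on A_1 ⊔ A_2 ⊔ A_3 where S ∈ A_j and P ∈ A_{j'} (j ≠ j') are adjacent if and only if the union of the vertices of S and P forms a clique in G. Then the number of triangles in F equals the number of k-cliques of G having exactly one vertex in each part U_i. -/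
/-! A colorful `k`-clique `u` is cut into its restrictions to the three classes `f ⁻¹' {j}`;
conversely a triple of partial choices glues back to a single choice `u`. Under this
correspondence, "every pair of distinct indices is adjacent" splits according to whether
the two indices lie in the same class (the three partial cliques) or in different classes
(the edges of the triangle). -/

def Equiv.piFiberEquiv {ι κ : Type*} (f : ι → κ) (U : ι → Type*) :
    ((i : ι) → U i) ≃ ((j : κ) → (i : {i // f i = j}) → U i) where
  toFun u _ i := u i
  invFun t i := t (f i) ⟨i, rfl⟩
  left_inv _ := rfl
  right_inv t := by
    funext j ⟨i, hi⟩
    subst hi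
    rfl

theorem forall_ne_iff_fiberwise {ι κ : Type*} (f : ι → κ) (S : ι → ι → Prop) :
    ((∀ j, ∀ a b : {i // f i = j}, a ≠ b → S a b) ∧
        ∀ j j', j ≠ j' → ∀ (a : {i // f i = j}) (b : {i // f i = j'}), S a b) ↔
      ∀ a b, a ≠ b → S a b := by
  refine ⟨fun ⟨hsame, hdiff⟩ a b hab => ?_, fun h => ⟨?_, ?_⟩⟩
  · by_cases hf : f a = f b
    · exact hsame (f a) ⟨a, rfl⟩ ⟨b, hf.symm⟩ (fun h => hab congr($h.1))
    · exact hdiff (f a) (f b) hf ⟨a, rfl⟩ ⟨b, rfl⟩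
  · exact fun j a b hab => h a b (Subtype.coe_injective.ne hab)
  · exact fun j j' hj a b => h a b fun hab => hj (a.2.symm.trans (hab ▸ b.2))

theorem auxiliary_triangle_count_general
    (k : ℕ) (U : Fin k → Type*)
    (G : SimpleGraph ((i : Fin k) × U i))
    (f : Fin k → Fin 3) :
    Nat.card {t : (j : Fin 3) → (i : {i : Fin k // f i = j}) → U i.1 //
        (∀ j : Fin 3, ∀ a b : {i : Fin k // f i = j}, a ≠ b →
          G.Adj ⟨a.1, t j a⟩ ⟨b.1, t j b⟩) ∧
        (∀ j j' : Fin 3, j ≠ j' →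
          ∀ (a : {i : Fin k // f i = j}) (b : {i : Fin k // f i = j'}),
            G.Adj ⟨a.1, t j a⟩ ⟨b.1, t j' b⟩)}
      = Nat.card {u : (i : Fin k) → U i //
          ∀ i j : Fin k, i ≠ j → G.Adj ⟨i, u i⟩ ⟨j, u j⟩} :=
  Nat.card_congr <| (Equiv.subtypeEquiv (Equiv.piFiberEquiv f U) fun u =>
    (forall_ne_iff_fiberwise f fun i j => G.Adj ⟨i, u i⟩ ⟨j, u j⟩).symm).symm

/-- Nešetřil–Poljak style reduction. For a `k`-partite graph `G` and a
partition of the index set into three classes (fibers of `f : Fin k → Fin 3`), the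
triangles of the auxiliary tripartite graph `F` (whose vertices are the partial cliques
on each index class, adjacent when their union is a clique) are in bijection with the
colorful `k`-cliques of `G`. -/
theorem auxiliary_triangle_count
    (k : ℕ) (U : Fin k → Type*) [∀ i, Fintype (U i)]
    (G : SimpleGraph ((i : Fin k) × U i))
    (hpart : ∀ a b : (i : Fin k) × U i, G.Adj a b → a.1 ≠ b.1)
    (f : Fin k → Fin 3) :
    Nat.card {t : (j : Fin 3) → (i : {i : Fin k // f i = j}) → U i.1 //
        (∀ j : Fin 3, ∀ a b : {i : Fin k // f i = j}, a ≠ b →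
          G.Adj ⟨a.1, t j a⟩ ⟨b.1, t j b⟩) ∧
        (∀ j j' : Fin 3, j ≠ j' →
          ∀ (a : {i : Fin k // f i = j}) (b : {i : Fin k // f i = j'}),
            G.Adj ⟨a.1, t j a⟩ ⟨b.1, t j' b⟩)}
      = Nat.card {u : (i : Fin k) → U i //
          ∀ i j : Fin k, i ≠ j → G.Adj ⟨i, u i⟩ ⟨j, u j⟩} :=
  auxiliary_triangle_count_general k U G f
end

section
/- Let A be a finite set of integers, all contained in the interval [−U, U] for some U > 0, and let k ≥ 2. Define arrays A_i = {a + 3^i·10U : a ∈ A} for 1 ≤ i ≤ k−1 and A_k = {a − 10U·Σ_{i=1}^{k-1} 3^i : a ∈ A}. Then the number of k-tuples (b_1, ..., b_k) ∈ A_1 × ... × A_k with b_1 + ... + b_k = 0 equals the number of k-tuples (a_1, ..., a_k) ∈ A^k with a_1 + ... + a_k = 0. (Combined with counting ordered tuples of distinct elements, the colorful count of a k-sum instance equals the ordered count of the original instance.) -/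
open Finset

theorem sum_fin_ite_lt_pred_neg_sum_range {G : Type*} [AddCommGroup G] (k : ℕ) (f : ℕ → G) :
    ∑ i : Fin k, (if (i : ℕ) < k - 1 then f i else -∑ j ∈ range (k - 1), f j) = 0 := by
  rw [Fin.sum_univ_eq_sum_range (fun i => if i < k - 1 then f i else -∑ j ∈ range (k - 1), f j)]
  cases k with
  | zero => simp
  | succ m =>
    rw [sum_range_succ, Nat.add_sub_cancel, if_neg (lt_irrefl m),
      sum_congr rfl fun j hj => if_pos (mem_range.mp hj), add_neg_cancel]

theorem card_zero_sum_image_add_right {ι G : Type*} [Fintype ι] [AddCommGroup G] [DecidableEq G]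
    (S : ι → Finset G) (c : ι → G) (hc : ∑ i, c i = 0) :
    Nat.card {b : ι → G // (∀ i, b i ∈ (S i).image (· + c i)) ∧ ∑ i, b i = 0}
      = Nat.card {a : ι → G // (∀ i, a i ∈ S i) ∧ ∑ i, a i = 0} :=
  Nat.card_congr <| .symm <| (Equiv.addRight c).subtypeEquiv fun a => by
    simp only [Equiv.coe_addRight, Pi.add_apply, (add_left_injective _).mem_finset_image,
      sum_add_distrib, hc, add_zero]

theorem ksum_shift_reduction_general
    (k : ℕ) (U : ℤ)
    (A : Finset ℤ) :
    Nat.card {b : Fin k → ℤ //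
        (∀ i : Fin k, b i ∈ A.image (fun a => a +
          (if (i : ℕ) < k - 1 then (3:ℤ) ^ ((i : ℕ) + 1) * (10 * U)
            else -(∑ j ∈ Finset.range (k - 1), (3:ℤ) ^ (j + 1) * (10 * U))))) ∧
        ∑ i, b i = 0}
      = Nat.card {a : Fin k → ℤ // (∀ i, a i ∈ A) ∧ ∑ i, a i = 0} :=
  card_zero_sum_image_add_right (fun _ => A) _
    (sum_fin_ite_lt_pred_neg_sum_range k fun j => (3:ℤ) ^ (j + 1) * (10 * U))

/-- Shifting reduction from `k`-SUM to colorful `k`-SUM. With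
`A ⊆ [−U, U]`, `A_i = A + 3^i·10U` for `i = 1, …, k−1` and
`A_k = A − 10U·∑_{i=1}^{k−1} 3^i`, the number of zero-sum tuples
`(b_1, …, b_k) ∈ A_1 × ⋯ × A_k` equals the number of zero-sum tuples in `A^k`. -/
theorem ksum_shift_reduction
    (k : ℕ) (hk : 2 ≤ k) (U : ℤ) (hU : 0 < U)
    (A : Finset ℤ) (hA : ∀ a ∈ A, -U ≤ a ∧ a ≤ U) :
    Nat.card {b : Fin k → ℤ //
        (∀ i : Fin k, b i ∈ A.image (fun a => a +
          (if (i : ℕ) < k - 1 then (3:ℤ) ^ ((i : ℕ) + 1) * (10 * U)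
            else -(∑ j ∈ Finset.range (k - 1), (3:ℤ) ^ (j + 1) * (10 * U))))) ∧
        ∑ i, b i = 0}
      = Nat.card {a : Fin k → ℤ // (∀ i, a i ∈ A) ∧ ∑ i, a i = 0} :=
  ksum_shift_reduction_general k U A
end
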